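/- arXiv:2210.02773 — 4 statements merged into one kernel-verified Lean document; each statement's English description precedes it below -/
import Mathlib

section
/- Let T : V → [k] ∪ {k+1} satisfy the discrete average property on a finite directed graph (V, E) with sink set S and frugal targets fr. Define T'(v) = k* ⊖ pred(T(v)) if T(v) > 0 and T'(v) = k+1 otherwise. Then T' also satisfies the discrete average property (with v⁺ and v⁻ swapped: a T-maximal neighbor is T'-minimal and vice versa). -/
/-- Integer "value" of an element of ℕ* = ℕ × Bool, embedding the order
    0 < 0* < 1 < 1* < ... into ℕ. `(n, true)` represents `n*`. -/
def val (x : ℕ × Bool) : ℕ := 2 * x.1 + (if x.2 then 1 else 0)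

/-- x ⊕ y on ℕ*. -/
def oplus (x y : ℕ × Bool) : ℕ × Bool := (x.1 + y.1, x.2 || y.2)

/-- x ⊖ y on ℕ*. -/
def ominus (x y : ℕ × Bool) : ℕ × Bool := (x.1 - y.1, x.2 && !y.2)

/-- Order successor on ℕ*. -/
def nsucc (x : ℕ × Bool) : ℕ × Bool := if x.2 then (x.1 + 1, false) else (x.1, true)

/-- Order predecessor on ℕ*. -/
def npred (x : ℕ × Bool) : ℕ × Bool := if x.2 then (x.1, false) else (x.1 - 1, true)

/-- The discrete average ⌊(|p| + |m|)/2⌋ ⊕ ε of the paper, where `p` is the max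
    neighbor value and `m` the min neighbor value. -/
def avg (p m : ℕ × Bool) : ℕ × Bool :=
  if (p.1 + m.1) % 2 = 0 ∧ m.2 = false then ((p.1 + m.1) / 2, false)
  else if (p.1 + m.1) % 2 = 1 ∧ m.2 = true then ((p.1 + m.1) / 2 + 1, false)
  else ((p.1 + m.1) / 2, true)

/-- The bid Bid_T(v) of the paper, defined from the max/min neighbor values. -/
def bid (p m : ℕ × Bool) : ℕ × Bool :=
  if (p.1 + m.1) % 2 = 0 ∧ m.2 = false then ((p.1 - m.1) / 2, false)
  else if (p.1 + m.1) % 2 = 1 ∧ m.2 = true then ((p.1 - m.1) / 2, false)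
  else if (p.1 + m.1) % 2 = 0 ∧ m.2 = true then npred ((p.1 - m.1) / 2, false)
  else nsucc ((p.1 - m.1) / 2, false)

/-- The discrete average property for a function T on a game with edges E,
    sinks S and frugal targets fr: T agrees with fr on sinks, and at every
    non-sink v there are a T-maximal neighbor vp and a T-minimal neighbor vm
    with T v equal to their discrete average. -/
def AvgProp {V : Type} (E : V → V → Prop) (S : Set V)
    (fr : V → ℕ × Bool) (T : V → ℕ × Bool) : Prop :=
  (∀ s ∈ S, T s = fr s) ∧
  ∀ v, v ∉ S → ∃ vp vm, E v vp ∧ E v vm ∧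
    (∀ u, E v u → val (T u) ≤ val (T vp)) ∧
    (∀ u, E v u → val (T vm) ≤ val (T u)) ∧
    T v = avg (T vp) (T vm)

private def flipC (k : ℕ) (x : ℕ × Bool) : ℕ × Bool :=
  if x.2 then ((k - x.1 : ℕ), true) else ((k + 1 - x.1 : ℕ), false)

private lemma flip_avg (k : ℕ) (p m : ℕ × Bool)
    (hp : val p ≤ val ((k : ℕ), true) ∨ p = ((k + 1 : ℕ), false))
    (hm : val m ≤ val ((k : ℕ), true) ∨ m = ((k + 1 : ℕ), false))
    (hpm : val m ≤ val p) :
    flipC k (avg p m) = avg (flipC k m) (flipC k p) := by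
  obtain ⟨a, b⟩ := p
  obtain ⟨c, d⟩ := m
  have ha : (2 * a + (if b then 1 else 0)) ≤ 2 * k + 2 := by
    rcases hp with h | h
    · simp only [val] at h; cases b <;> simp_all <;> omega
    · rw [Prod.ext_iff] at h; obtain ⟨h1, h2⟩ := h; subst h2; simp at h1 ⊢; omega
  have hc : (2 * c + (if d then 1 else 0)) ≤ 2 * k + 2 := by
    rcases hm with h | h
    · simp only [val] at h; cases d <;> simp_all <;> omega
    · rw [Prod.ext_iff] at h; obtain ⟨h1, h2⟩ := h; subst h2; simp at h1 ⊢; omega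
  simp only [val] at hpm
  clear hp hm
  cases b <;> cases d <;> norm_num at ha hc hpm <;>
    · simp only [avg, flipC, if_true, if_false, Bool.true_eq_false, Bool.false_eq_true,
        and_true, and_false, ite_false, ite_true]
      split_ifs <;>
        first
          | contradiction
          | (simp only [Prod.mk.injEq, Bool.true_eq_false, Bool.false_eq_true,
              and_true, and_false]
             omega)

private lemma flip_eq (k : ℕ) (x : ℕ × Bool) :
    (if 0 < val x then ominus (k, true) (npred x) else ((k + 1 : ℕ), false))
      = flipC k x := by
  obtain ⟨a, b⟩ := x
  cases b
  · cases a with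
    | zero => simp [val, flipC]
    | succ n =>
      simp only [val, flipC, npred, ominus]
      norm_num
      omega
  · simp only [val, flipC, npred, ominus]
    norm_num

private lemma val_flipC (k : ℕ) (x : ℕ × Bool)
    (hx : val x ≤ val ((k : ℕ), true) ∨ x = ((k + 1 : ℕ), false)) :
    val (flipC k x) = 2 * (k + 1) - val x ∧ val x ≤ 2 * (k + 1) := by
  obtain ⟨a, b⟩ := x
  rcases hx with h | h
  · simp only [val, flipC] at h ⊢
    cases b <;> norm_num at h ⊢ <;> omega
  · rw [Prod.ext_iff] at h
    obtain ⟨h1, h2⟩ := h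
    subst h1; subst h2
    simp [val, flipC]

/-- If T : V → [k] ∪ {k+1} satisfies the discrete average property, then the
    flipped function T'(v) = k* ⊖ pred(T(v)) (for T(v) > 0, else k+1) also
    satisfies the discrete average property. -/
theorem stmt_4 {V : Type} [Fintype V] (E : V → V → Prop) (S : Set V)
    (fr : V → ℕ × Bool) (k : ℕ) (T : V → ℕ × Bool)
    (hrange : ∀ v, val (T v) ≤ val ((k : ℕ), true) ∨ T v = ((k + 1 : ℕ), false))
    (hT : AvgProp E S fr T) :
    AvgProp E S
      (fun s => if 0 < val (fr s) then ominus (k, true) (npred (fr s))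
                else ((k + 1 : ℕ), false))
      (fun v => if 0 < val (T v) then ominus (k, true) (npred (T v))
                else ((k + 1 : ℕ), false)) := by
  obtain ⟨hS, hA⟩ := hT
  constructor
  · intro s hs
    simp only
    rw [hS s hs]
  · intro v hv
    obtain ⟨vp, vm, hEp, hEm, hmax, hmin, havg⟩ := hA v hv
    refine ⟨vm, vp, hEm, hEp, ?_, ?_, ?_⟩
    · intro u hu
      simp only [flip_eq]
      obtain ⟨e1, e2⟩ := val_flipC k (T u) (hrange u)
      obtain ⟨e3, e4⟩ := val_flipC k (T vm) (hrange vm)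
      have := hmin u hu
      omega
    · intro u hu
      simp only [flip_eq]
      obtain ⟨e1, e2⟩ := val_flipC k (T u) (hrange u)
      obtain ⟨e3, e4⟩ := val_flipC k (T vp) (hrange vp)
      have := hmax u hu
      omega
    · simp only [flip_eq]
      rw [havg]
      exact flip_avg k (T vp) (T vm) (hrange vp) (hrange vm) (hmin vp hEp)
end

section
/- Let T satisfy the discrete average property at a vertex v with neighbors realizing T(v⁺) and T(v⁻), and let Bid_T(v) be the bid defined by the four cases (depending on parity of |T(v⁺)| + |T(v⁻)| and advantage status of T(v⁻)). If T(v⁻) ∈ ℕ, then T(v) ⊖ Bid_T(v) = T(v⁻). -/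
/-- If T(v⁻) ∈ ℕ then T(v) ⊖ Bid_T(v) = T(v⁻), where T(v) is the discrete
    average of p = T(v⁺) and m = T(v⁻). -/
theorem stmt_5 (p m : ℕ × Bool) (hm : m.2 = false) (hle : m.1 ≤ p.1) :
    ominus (avg p m) (bid p m) = m := by
  obtain ⟨m1, m2⟩ := m
  simp only at hm; subst hm
  simp only [avg, bid, ominus, nsucc, npred]
  rcases Nat.even_or_odd (p.1 + m1) with h | h
  · have h2 : (p.1 + m1) % 2 = 0 := Nat.even_iff.mp h
    simp only [h2]
    norm_num
    omega
  · have h2 : (p.1 + m1) % 2 = 1 := Nat.odd_iff.mp h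
    simp only [h2]
    norm_num
    omega
end

section
/- There exists a reachability discrete-bidding game with more than one function satisfying the discrete average property. Concretely, on the 4-vertex graph with vertices v0, v1, v2, t, edges v0→v1, v1→v0, v1→v2, v2→t, v2→v0, v0→v0, target sink t with fr(t) = 2, and total budget k = 5, both T1 = (T1(v0), T1(v1), T1(v2), T1(t)) = (4, 3*, 3, 2) and T2 = (5, 4*, 3*, 2) satisfy the discrete average property. -/
/-- Edges of the game 𝒢₁ from Fig. 1: v0→v1, v1→v0, v1→v2, v2→t, v2→v0, v0→v0,
    with vertices v0 = 0, v1 = 1, v2 = 2, t = 3. -/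
def Efig (a b : Fin 4) : Prop :=
  (a = 0 ∧ b = 1) ∨ (a = 1 ∧ b = 0) ∨ (a = 1 ∧ b = 2) ∨
  (a = 2 ∧ b = 3) ∨ (a = 2 ∧ b = 0) ∨ (a = 0 ∧ b = 0)

instance : ∀ a b, Decidable (Efig a b) := fun a b => by
  unfold Efig; infer_instance

/-- Non-uniqueness of functions with the discrete average property: in the game
    of Fig. 1 with total budget k = 5 and fr(t) = 2, both T1 = (4, 3*, 3, 2) and
    T2 = (5, 4*, 3*, 2) satisfy the discrete average property. -/
theorem stmt_11 :
    AvgProp Efig ({3} : Set (Fin 4)) (fun _ => ((2 : ℕ), false))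
      (![((4 : ℕ), false), (3, true), (3, false), (2, false)]) ∧
    AvgProp Efig ({3} : Set (Fin 4)) (fun _ => ((2 : ℕ), false))
      (![((5 : ℕ), false), (4, true), (3, true), (2, false)]) := by
  constructor <;>
  · refine ⟨by decide, fun v hv => ?_⟩
    simp only [Set.mem_singleton_iff] at hv
    fin_cases v
    · exact ⟨0, 1, by decide, by decide, by decide, by decide, by decide⟩
    · exact ⟨0, 2, by decide, by decide, by decide, by decide, by decide⟩
    · exact ⟨0, 3, by decide, by decide, by decide, by decide, by decide⟩
    · exact absurd rfl hv
end

section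
/- (Overbidding by more than one notch is punishable) With T satisfying the average property at v and B = T(v), if Player 1 bids b₁ > succ(Bid_T(v)), then B ⊖ b₁ < T(v⁻) ≤ T(u) for every neighbor u of v; hence for any vertex Player 1 moves to, his resulting budget is strictly below the T-value there. -/
set_option maxHeartbeats 2000000 in
lemma key_ominus_lt (p m b : ℕ × Bool) (hle : val m ≤ val p)
    (hbig : val (nsucc (bid p m)) < val b)
    (hlegal : val b ≤ val (avg p m)) :
    val (ominus (avg p m) b) < val m := by
  obtain ⟨a, pb⟩ := p; obtain ⟨c, mb⟩ := m; obtain ⟨d, bb⟩ := b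
  rcases pb with _|_ <;> rcases mb with _|_ <;> rcases bb with _|_ <;>
    simp only [val, ominus, nsucc, npred, avg, bid] at * <;>
    split_ifs at * <;> simp_all <;> omega

/-- Overbidding by more than one notch is punishable: at a vertex v with
    T(v) = avg(T(v⁺), T(v⁻)), if Player 1 bids b₁ > succ(Bid_T(v)) (legally,
    b₁ ≤ T(v)), then his remaining budget T(v) ⊖ b₁ is strictly below T(u)
    for every neighbor u of v. -/
theorem stmt_17 {V : Type} (E : V → V → Prop) (T : V → ℕ × Bool)
    (v vp vm : V) (hp : E v vp) (hm : E v vm)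
    (hmax : ∀ u, E v u → val (T u) ≤ val (T vp))
    (hmin : ∀ u, E v u → val (T vm) ≤ val (T u))
    (havg : T v = avg (T vp) (T vm))
    (b₁ : ℕ × Bool)
    (hbig : val (nsucc (bid (T vp) (T vm))) < val b₁)
    (hlegal : val b₁ ≤ val (T v)) :
    ∀ u, E v u → val (ominus (T v) b₁) < val (T u) := by
  intro u hu
  have h1 : val (ominus (T v) b₁) < val (T vm) := by
    rw [havg] at hlegal ⊢
    exact key_ominus_lt _ _ _ (hmax vm hm) hbig hlegal
  exact lt_of_lt_of_le h1 (hmin u hu)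
end
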